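/- (Proposition 4, white part.) Let c ≥ 1 be an integer. The 𝔽₂-dimension of the polarized kernel ker WB of the c×c square grid satisfies 2·dim ker WB_{c,c} = c − (c mod 2). -/

import Mathlib

/-- Membership in the m×n rectangular grid {0,…,m−1}×{0,…,n−1}. -/
def InGrid (m n i j : ℤ) : Prop :=
  0 ≤ i ∧ i ≤ m - 1 ∧ 0 ≤ j ∧ j ≤ n - 1


instance (m n i j : ℤ) : Decidable (InGrid m n i j) :=
  inferInstanceAs (Decidable (_ ∧ _ ∧ _ ∧ _))

/-- A function on ℤ×ℤ with values in ZMod 2, vanishing outside the m×n grid,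
is harmonic if the sum of its values at the four neighbours of any grid point is 0. -/
def IsHarmonic (m n : ℤ) (v : ℤ → ℤ → ZMod 2) : Prop :=
  (∀ i j : ℤ, ¬ InGrid m n i j → v i j = 0) ∧
  (∀ i j : ℤ, InGrid m n i j →
    v (i - 1) j + v (i + 1) j + v i (j - 1) + v i (j + 1) = 0)

/-- The 𝔽₂-vector space of harmonic functions on the m×n grid. -/
def harm (m n : ℤ) : Submodule (ZMod 2) (ℤ → ℤ → ZMod 2) where
  carrier := {v | IsHarmonic m n v}
  zero_mem' := ⟨fun _ _ _ => rfl, fun _ _ _ => by simp⟩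
  add_mem' := by
    rintro a b ⟨ha0, ha1⟩ ⟨hb0, hb1⟩
    refine ⟨fun i j h => ?_, fun i j h => ?_⟩
    · simp [Pi.add_apply, ha0 i j h, hb0 i j h]
    · have h1 := ha1 i j h
      have h2 := hb1 i j h
      simp only [Pi.add_apply]
      linear_combination h1 + h2
  smul_mem' := by
    rintro c a ⟨ha0, ha1⟩
    refine ⟨fun i j h => ?_, fun i j h => ?_⟩
    · simp [Pi.smul_apply, ha0 i j h]
    · have h1 := ha1 i j h
      simp only [Pi.smul_apply, smul_eq_mul]
      linear_combination c * h1

/-- Functions vanishing on a prescribed set of points. -/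
def vanishOn (P : ℤ → ℤ → Prop) : Submodule (ZMod 2) (ℤ → ℤ → ZMod 2) where
  carrier := {v | ∀ i j : ℤ, P i j → v i j = 0}
  zero_mem' := fun _ _ _ => rfl
  add_mem' := by
    intro a b ha hb i j h
    simp [Pi.add_apply, ha i j h, hb i j h]
  smul_mem' := by
    intro c a ha i j h
    simp [Pi.smul_apply, ha i j h]

/-- The polarized kernel ker BW: harmonic functions vanishing at white points
(points with i+j odd). -/
def kerBW (m n : ℤ) : Submodule (ZMod 2) (ℤ → ℤ → ZMod 2) :=
  harm m n ⊓ vanishOn (fun i j => Odd (i + j))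

/-- The polarized kernel ker WB: harmonic functions vanishing at black points
(points with i+j even). -/
def kerWB (m n : ℤ) : Submodule (ZMod 2) (ℤ → ℤ → ZMod 2) :=
  harm m n ⊓ vanishOn (fun i j => Even (i + j))

/-!
A harmonic function on the grid is determined by its bottom row, since harmonicity at `(i, j)`
expresses `v i (j + 1)` through the other three neighbours; for `v ∈ kerWB` the bottom row is in
turn determined by its `c / 2` white entries `v (2k+1) 0`. Conversely, over `𝔽₂` every
d'Alembert wave `F (i + j + 2) + F (i - j)` is harmonic on all of `ℤ × ℤ`, and it vanishes on the
four lines bordering the grid as soon as `F` is even and `2 (c + 1)`-periodic. Choosing `F`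
supported on odd integers makes the wave vanish at black points, and suitable step functions `F`
realise every pattern of white entries in the bottom row, so `dim kerWB = c / 2`.
-/

open Function

lemma mem_harm {m n : ℤ} {v : ℤ → ℤ → ZMod 2} : v ∈ harm m n ↔ IsHarmonic m n v := Iff.rfl

lemma mem_kerWB {m n : ℤ} {v : ℤ → ℤ → ZMod 2} :
    v ∈ kerWB m n ↔ v ∈ harm m n ∧ ∀ i j : ℤ, Even (i + j) → v i j = 0 := Iff.rfl

section Wave

variable {R : Type*} [CommRing R] [CharP R 2]

def wave (F : ℤ → R) (i j : ℤ) : R := F (i + j + 2) + F (i - j)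

lemma wave_neighbour_sum (F : ℤ → R) (i j : ℤ) :
    wave F (i - 1) j + wave F (i + 1) j + wave F i (j - 1) + wave F i (j + 1) = 0 := by
  simp only [wave]
  linear_combination (norm := ring_nf) (CharTwo.two_eq_zero : (2 : R) = 0) *
    (F (i + j + 1) + F (i + j + 3) + F (i - j - 1) + F (i - j + 1))

lemma wave_eq_zero_of_frame {F : ℤ → R} {m n : ℤ} (hF : F.Even) (hm : F.Periodic (2 * (m + 1)))
    (hn : F.Periodic (2 * (n + 1))) {i j : ℤ} (h : i = -1 ∨ i = m ∨ j = -1 ∨ j = n) :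
    wave F i j = 0 := by
  rw [wave]
  rcases h with rfl | rfl | rfl | rfl
  · rw [show F (-1 - j) = F (-1 + j + 2) by rw [← hF]; congr 1; ring]
    exact CharTwo.add_self_eq_zero _
  · rw [show F (i - j) = F (i + j + 2) by rw [← hF, ← hm]; congr 1; ring]
    exact CharTwo.add_self_eq_zero _
  · rw [show i - -1 = i + -1 + 2 by ring]
    exact CharTwo.add_self_eq_zero _
  · rw [show F (i - j) = F (i + j + 2) by rw [← hn]; congr 1; ring]
    exact CharTwo.add_self_eq_zero _

end Wave

def gridRestrict (m n : ℤ) (w : ℤ → ℤ → ZMod 2) (i j : ℤ) : ZMod 2 :=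
  if InGrid m n i j then w i j else 0

section GridRestrict

variable {m n : ℤ} {w : ℤ → ℤ → ZMod 2}

lemma gridRestrict_eq_of_frame (hframe : ∀ i j, (i = -1 ∨ i = m ∨ j = -1 ∨ j = n) → w i j = 0)
    {i j : ℤ} (hi : -1 ≤ i ∧ i ≤ m) (hj : -1 ≤ j ∧ j ≤ n) : gridRestrict m n w i j = w i j := by
  unfold gridRestrict
  split_ifs with h
  · rfl
  · exact (hframe i j (by unfold InGrid at h; omega)).symm

lemma gridRestrict_mem_harm
    (hsum : ∀ i j, InGrid m n i j → w (i - 1) j + w (i + 1) j + w i (j - 1) + w i (j + 1) = 0)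
    (hframe : ∀ i j, (i = -1 ∨ i = m ∨ j = -1 ∨ j = n) → w i j = 0) :
    gridRestrict m n w ∈ harm m n := by
  refine ⟨fun i j h => if_neg h, fun i j h => ?_⟩
  obtain ⟨hi0, hi1, hj0, hj1⟩ := h
  rw [gridRestrict_eq_of_frame hframe (by omega) (by omega),
    gridRestrict_eq_of_frame hframe (by omega) (by omega),
    gridRestrict_eq_of_frame hframe (by omega) (by omega),
    gridRestrict_eq_of_frame hframe (by omega) (by omega)]
  exact hsum i j ⟨hi0, hi1, hj0, hj1⟩

end GridRestrict

lemma gridRestrict_wave_mem_kerWB {m n : ℤ} {F : ℤ → ZMod 2} (hF : F.Even)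
    (hm : F.Periodic (2 * (m + 1))) (hn : F.Periodic (2 * (n + 1)))
    (hodd : ∀ x, Even x → F x = 0) : gridRestrict m n (wave F) ∈ kerWB m n := by
  refine ⟨gridRestrict_mem_harm (fun i j _ => wave_neighbour_sum F i j)
    (fun i j h => wave_eq_zero_of_frame hF hm hn h), fun i j h => ?_⟩
  unfold gridRestrict
  split_ifs
  · have h₁ : Even (i + j + 2) := h.add even_two
    have h₂ : Even (i - j) := by simpa [Int.even_sub, Int.even_add] using h
    rw [wave, hodd _ h₁, hodd _ h₂, add_zero]
  · rfl

section EvenPeriodicExt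

variable {M : Type*} [Zero M] (p : ℕ) (a : ℕ → M)

def evenPeriodicExt (x : ℤ) : M :=
  if Odd x then a (x : ZMod p).valMinAbs.natAbs else 0

lemma evenPeriodicExt_even : (evenPeriodicExt p a).Even := fun x => by
  simp only [evenPeriodicExt, odd_neg, Int.cast_neg, ZMod.natAbs_valMinAbs_neg]

lemma evenPeriodicExt_periodic (hp : Even p) : (evenPeriodicExt p a).Periodic p := fun x => by
  have hodd : Odd (x + p) ↔ Odd x := by simp [Int.odd_add, hp]
  simp only [evenPeriodicExt, hodd, Int.cast_add, Int.cast_natCast, ZMod.natCast_self, add_zero]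

lemma evenPeriodicExt_of_even {x : ℤ} (hx : Even x) : evenPeriodicExt p a x = 0 :=
  if_neg (Int.not_odd_iff_even.2 hx)

lemma evenPeriodicExt_of_odd {x : ℤ} (hx : Odd x) (h0 : 0 ≤ x) (hp : 2 * x ≤ p) :
    evenPeriodicExt p a x = a x.toNat := by
  lift x to ℕ using h0
  rw [evenPeriodicExt, if_pos hx, Int.cast_natCast,
    ZMod.valMinAbs_natCast_of_le_half (by omega), Int.natAbs_natCast, Int.toNat_natCast]

end EvenPeriodicExt

lemma eq_zero_of_mem_harm_of_row_zero {m n : ℤ} {v : ℤ → ℤ → ZMod 2} (hv : v ∈ harm m n)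
    (h0 : ∀ i, v i 0 = 0) : v = 0 := by
  obtain ⟨hout, hsum⟩ := mem_harm.1 hv
  have hrows : ∀ k : ℕ, ∀ i, v i (k - 1) = 0 ∧ v i k = 0 := by
    intro k
    induction k with
    | zero => exact fun i => ⟨hout _ _ (by unfold InGrid; omega), h0 i⟩
    | succ k ih =>
      intro i
      refine ⟨by simpa using (ih i).2, ?_⟩
      push_cast
      by_cases hg : InGrid m n i k
      · have hsum := hsum i k hg
        rwa [(ih (i - 1)).2, (ih (i + 1)).2, (ih i).1, zero_add, zero_add, zero_add] at hsum
      · exact hout _ _ (by unfold InGrid at hg ⊢; omega)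
  funext i j
  by_cases hj : 0 ≤ j
  · lift j to ℕ using hj
    exact (hrows j i).2
  · exact hout _ _ (by unfold InGrid; omega)

lemma row_zero_eq_zero_of_mem_kerWB {m n : ℤ} {v : ℤ → ℤ → ZMod 2} (hv : v ∈ kerWB m n)
    (hwhite : ∀ k : ℕ, 2 * (k : ℤ) + 1 < m → v (2 * k + 1) 0 = 0) (i : ℤ) : v i 0 = 0 := by
  obtain ⟨hharm, hblack⟩ := mem_kerWB.1 hv
  rcases Int.even_or_odd i with hi | ⟨k, rfl⟩
  · exact hblack i 0 (by simpa using hi)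
  by_cases hg : InGrid m n (2 * k + 1) 0
  · unfold InGrid at hg
    lift k to ℕ using (by omega)
    exact hwhite k (by omega)
  · exact (mem_harm.1 hharm).1 _ _ hg

def whiteRowZero (c : ℕ) : kerWB (c : ℤ) (c : ℤ) →ₗ[ZMod 2] Fin (c / 2) → ZMod 2 where
  toFun v k := (v : ℤ → ℤ → ZMod 2) (2 * (k : ℕ) + 1) 0
  map_add' _ _ := rfl
  map_smul' _ _ := rfl

lemma whiteRowZero_injective (c : ℕ) : Injective (whiteRowZero c) := by
  refine (injective_iff_map_eq_zero _).2 fun v hv => Subtype.ext ?_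
  refine eq_zero_of_mem_harm_of_row_zero v.2.1 (row_zero_eq_zero_of_mem_kerWB v.2 fun k hk => ?_)
  exact congrFun hv ⟨k, by omega⟩

/-- On the bottom row `stepExt c k (2l+3) + stepExt c k (2l+1) = [k ≤ l] + [k < l] = [k = l]`,
so the wave of `stepExt c k` has the `k`-th unit vector as its white bottom-row entries. -/
def stepExt (c k : ℕ) : ℤ → ZMod 2 :=
  evenPeriodicExt (2 * (c + 1)) fun x => if 2 * k + 1 < x then 1 else 0

lemma stepWave_mem_kerWB (c k : ℕ) :
    gridRestrict c c (wave (stepExt c k)) ∈ kerWB (c : ℤ) (c : ℤ) := by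
  have hper : (stepExt c k).Periodic (2 * ((c : ℤ) + 1)) := by
    simpa [stepExt] using evenPeriodicExt_periodic (2 * (c + 1)) _ (even_two_mul _)
  exact gridRestrict_wave_mem_kerWB (evenPeriodicExt_even _ _) hper hper
    fun _ hx => evenPeriodicExt_of_even _ _ hx

lemma whiteRowZero_stepWave (c : ℕ) (k : Fin (c / 2)) :
    whiteRowZero c ⟨_, stepWave_mem_kerWB c k⟩ = Pi.single k 1 := by
  funext l
  have hl := l.2
  have hg : InGrid c c (2 * (l : ℕ) + 1) 0 := by unfold InGrid; omega
  change gridRestrict c c _ _ _ = _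
  rw [gridRestrict, if_pos hg, wave, stepExt,
    evenPeriodicExt_of_odd _ _ ⟨l + 1, by ring⟩ (by omega) (by push_cast; omega),
    evenPeriodicExt_of_odd _ _ ⟨l, by ring⟩ (by omega) (by push_cast; omega),
    Pi.single_apply]
  split_ifs <;> simp only [Fin.ext_iff] at * <;> first | omega | decide

lemma whiteRowZero_surjective (c : ℕ) : Surjective (whiteRowZero c) := by
  rw [← LinearMap.range_eq_top, eq_top_iff, ← (Pi.basisFun (ZMod 2) (Fin (c / 2))).span_eq,
    Submodule.span_le]
  rintro _ ⟨k, rfl⟩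
  exact ⟨_, by rw [Pi.basisFun_apply, whiteRowZero_stepWave]⟩

theorem finrank_kerWB_square (c : ℕ) :
    Module.finrank (ZMod 2) (kerWB (c : ℤ) (c : ℤ)) = c / 2 := by
  rw [(LinearEquiv.ofBijective _ ⟨whiteRowZero_injective c, whiteRowZero_surjective c⟩).finrank_eq,
    Module.finrank_fin_fun]

theorem kerWB_square_dim_general (c : ℕ) :
    2 * Module.finrank (ZMod 2) (kerWB (c : ℤ) (c : ℤ)) = c - c % 2 := by
  rw [finrank_kerWB_square c]
  omega

/-- Proposition 4, white part: 2·dim ker WB of the c×c grid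
equals c − (c mod 2). -/
theorem kerWB_square_dim (c : ℕ) (hc : 1 ≤ c) :
    2 * Module.finrank (ZMod 2) (kerWB (c : ℤ) (c : ℤ)) = c - c % 2 :=
  kerWB_square_dim_general c
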